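/- For every ρ with (π−2)/(π+2) < ρ < 1, set c = √((1+ρ)/(1−ρ)) (so that c > √(π/2)). Then there exists a unique u* > 0 such that 1 − 2·Φ(c·u*) + u* = 0; moreover, −u* also satisfies the same equation, so the equation 1 − 2·Φ(c·u) + u = 0 has exactly the three real solutions −u*, 0, u*. -/

import Mathlib

open ProbabilityTheory Real Set

/-- The cumulative distribution function of the standard normal distribution `N(0,1)`. -/
noncomputable def stdNormCDF : ℝ → ℝ := fun x => ProbabilityTheory.cdf (gaussianReal 0 1) x

/-!
The left-hand side `f u = 1 − 2Φ(cu) + u` is odd, and on `[0, ∞)` it is strictly convex, since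
`f' u = 1 − 2c φ(cu)` increases with `u`. Its slope at `0` is `1 − 2c/√(2π)`, which is negative
exactly when `c > √(π/2)`, while `f u → ∞`. Hence `f` dips below zero right after `0` and comes
back up, crossing zero exactly once on `(0, ∞)`; strict convexity forbids a second crossing, and
oddness mirrors the root to `−u*`.
-/

open MeasureTheory

section Roots

variable {f : ℝ → ℝ}

theorem StrictConvexOn.eq_of_pos_of_map_eq_zero (hf : StrictConvexOn ℝ (Ici 0) f)
    (h0 : f 0 = 0) {x y : ℝ} (hx : 0 < x) (hy : 0 < y) (hfx : f x = 0) (hfy : f y = 0) :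
    x = y := by
  by_contra hne
  wlog hxy : x < y generalizing x y
  · exact this hy hx hfy hfx (Ne.symm hne) ((not_lt.mp hxy).lt_of_ne (Ne.symm hne))
  have := hf.secant_strict_mono self_mem_Ici hx.le hy.le hx.ne' hy.ne' hxy
  simp [h0, hfx, hfy] at this

theorem exists_gt_map_neg_of_deriv_neg {x₀ : ℝ} (hd : deriv f x₀ < 0) (h0 : f x₀ = 0) :
    ∃ x > x₀, f x < 0 := by
  have hsign := (eventually_nhdsWithin_sign_eq_of_deriv_neg hd h0).filter_mono
    (nhdsWithin_le_nhds (s := Ioi x₀))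
  obtain ⟨x, hx, hxx₀⟩ := (hsign.and self_mem_nhdsWithin).exists
  refine ⟨x, hxx₀, ?_⟩
  rwa [sign_neg (sub_neg.mpr hxx₀), sign_eq_neg_one_iff] at hx

theorem StrictConvexOn.existsUnique_pos_map_eq_zero (hf : StrictConvexOn ℝ (Ici 0) f)
    (hcont : ContinuousOn f (Ici 0)) (h0 : f 0 = 0) (hd : deriv f 0 < 0) {b : ℝ} (hb0 : 0 ≤ b)
    (hfb : 0 < f b) : ∃! x, 0 < x ∧ f x = 0 := by
  obtain ⟨a, ha, hfa⟩ := exists_gt_map_neg_of_deriv_neg hd h0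
  have hb : 0 < b := hb0.lt_of_ne (by rintro rfl; exact hfb.ne' h0)
  have hpos : ∀ x ∈ uIcc a b, 0 < x := fun x hx => lt_min ha hb |>.trans_le hx.1
  obtain ⟨x, hx, hfx⟩ := intermediate_value_uIcc (hcont.mono fun x hx => (hpos x hx).le)
    (show (0 : ℝ) ∈ uIcc (f a) (f b) from mem_uIcc.mpr (Or.inl ⟨hfa.le, hfb.le⟩))
  exact ⟨x, ⟨hpos x hx, hfx⟩,
    fun y hy => hf.eq_of_pos_of_map_eq_zero h0 hy.1 (hpos x hx) hy.2 hfx⟩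

theorem Function.Odd.map_eq_zero_iff_of_unique_pos_root (hf : f.Odd) {r : ℝ} (hfr : f r = 0)
    (huniq : ∀ x, 0 < x → f x = 0 → x = r) (u : ℝ) :
    f u = 0 ↔ u = -r ∨ u = 0 ∨ u = r := by
  refine ⟨fun hu => ?_, ?_⟩
  · rcases lt_trichotomy u 0 with h | h | h
    · left
      linarith [huniq (-u) (neg_pos.mpr h) (by rw [hf, hu, neg_zero])]
    · exact Or.inr (Or.inl h)
    · exact Or.inr (Or.inr (huniq u h hu))
  · rintro (rfl | rfl | rfl)
    · rw [hf, hfr, neg_zero]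
    · exact hf.map_zero
    · exact hfr

end Roots

section StandardNormal

theorem gaussianPDFReal_zero_neg (v : NNReal) (x : ℝ) :
    gaussianPDFReal 0 v (-x) = gaussianPDFReal 0 v x := by
  simp [gaussianPDFReal]

theorem continuous_gaussianPDFReal (μ : ℝ) (v : NNReal) : Continuous (gaussianPDFReal μ v) := by
  unfold gaussianPDFReal
  fun_prop

theorem strictAntiOn_gaussianPDFReal (μ : ℝ) {v : NNReal} (hv : v ≠ 0) :
    StrictAntiOn (gaussianPDFReal μ v) (Ici μ) := by
  intro x hx y hy hxy
  unfold gaussianPDFReal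
  gcongr
  exact sub_nonneg.mpr hx

theorem stdNormCDF_eq_integral (x : ℝ) :
    stdNormCDF x = ∫ t in Iic x, gaussianPDFReal 0 1 t := by
  rw [stdNormCDF, cdf_eq_real, measureReal_def, gaussianReal_apply_eq_integral 0 one_ne_zero,
    ENNReal.toReal_ofReal (integral_nonneg fun t => gaussianPDFReal_nonneg 0 1 t)]

theorem stdNormCDF_neg (x : ℝ) : stdNormCDF (-x) = 1 - stdNormCDF x := by
  have hint := integrable_gaussianPDFReal 0 1
  have htotal :
      (∫ t in Iic x, gaussianPDFReal 0 1 t) + ∫ t in Ioi x, gaussianPDFReal 0 1 t = 1 := by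
    rw [intervalIntegral.integral_Iic_add_Ioi hint.integrableOn hint.integrableOn]
    exact integral_gaussianPDFReal_eq_one 0 one_ne_zero
  have hreflect :
      (∫ t in Iic (-x), gaussianPDFReal 0 1 t) = ∫ t in Ioi x, gaussianPDFReal 0 1 t := by
    simpa [gaussianPDFReal_zero_neg] using integral_comp_neg_Iic (-x) (gaussianPDFReal 0 1)
  rw [stdNormCDF_eq_integral, stdNormCDF_eq_integral, hreflect]
  linarith

theorem stdNormCDF_zero : stdNormCDF 0 = 1 / 2 := by
  linarith [neg_zero (G := ℝ) ▸ stdNormCDF_neg 0]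

theorem hasDerivAt_stdNormCDF (x : ℝ) : HasDerivAt stdNormCDF (gaussianPDFReal 0 1 x) x := by
  have hint := integrable_gaussianPDFReal 0 1
  have hcont := continuous_gaussianPDFReal 0 1
  have hFTC : stdNormCDF = fun y => 1 / 2 + ∫ t in (0 : ℝ)..y, gaussianPDFReal 0 1 t := by
    funext y
    rw [← intervalIntegral.integral_Iic_sub_Iic hint.integrableOn hint.integrableOn,
      ← stdNormCDF_eq_integral, ← stdNormCDF_eq_integral, stdNormCDF_zero]
    ring
  rw [hFTC]
  exact (intervalIntegral.integral_hasDerivAt_right hint.intervalIntegrable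
    hcont.stronglyMeasurable.stronglyMeasurableAtFilter hcont.continuousAt).const_add _

end StandardNormal

section ThresholdResidual

noncomputable def thresholdResidual (c u : ℝ) : ℝ := 1 - 2 * stdNormCDF (c * u) + u

variable {c : ℝ}

theorem thresholdResidual_odd (c : ℝ) : (thresholdResidual c).Odd := by
  intro u
  simp only [thresholdResidual, mul_neg, stdNormCDF_neg]
  ring

theorem hasDerivAt_thresholdResidual (c u : ℝ) :
    HasDerivAt (thresholdResidual c) (1 - 2 * c * gaussianPDFReal 0 1 (c * u)) u := by
  have hinner : HasDerivAt (fun u => stdNormCDF (c * u)) (gaussianPDFReal 0 1 (c * u) * c) u :=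
    (hasDerivAt_stdNormCDF (c * u)).comp u
      ((hasDerivAt_id u).const_mul c |>.congr_deriv (mul_one c))
  exact (((hinner.const_mul 2).const_sub 1).add (hasDerivAt_id u)).congr_deriv (by ring)

theorem continuous_thresholdResidual (c : ℝ) : Continuous (thresholdResidual c) :=
  continuous_iff_continuousAt.mpr fun u => (hasDerivAt_thresholdResidual c u).continuousAt

theorem strictConvexOn_thresholdResidual (hc : 0 < c) :
    StrictConvexOn ℝ (Ici 0) (thresholdResidual c) := by
  refine StrictMonoOn.strictConvexOn_of_deriv (convex_Ici 0)
    (continuous_thresholdResidual c).continuousOn ?_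
  rw [interior_Ici]
  intro a ha b hb hab
  rw [(hasDerivAt_thresholdResidual c a).deriv, (hasDerivAt_thresholdResidual c b).deriv]
  have hpdf := strictAntiOn_gaussianPDFReal 0 one_ne_zero
    (mem_Ici.mpr (mul_nonneg hc.le (le_of_lt ha))) (mem_Ici.mpr (mul_nonneg hc.le (le_of_lt hb)))
    (mul_lt_mul_of_pos_left hab hc)
  nlinarith

theorem deriv_thresholdResidual_zero_neg (hc : √(π / 2) < c) :
    deriv (thresholdResidual c) 0 < 0 := by
  rw [(hasDerivAt_thresholdResidual c 0).deriv, mul_zero]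
  have hpdf : gaussianPDFReal 0 1 0 = (√(2 * π))⁻¹ := by simp [gaussianPDFReal]
  have hsqrt : √(2 * π) = 2 * √(π / 2) := by
    rw [show 2 * π = 2 ^ 2 * (π / 2) by ring, sqrt_mul' _ (by positivity), sqrt_sq zero_le_two]
  have hs : 0 < √(π / 2) := by positivity
  have hratio : 2 * c * (2 * √(π / 2))⁻¹ = c / √(π / 2) := by field_simp
  rw [hpdf, hsqrt, hratio, sub_neg]
  exact (one_lt_div hs).mpr hc

theorem thresholdResidual_two_pos (c : ℝ) : 0 < thresholdResidual c 2 := by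
  have : stdNormCDF (c * 2) ≤ 1 := cdf_le_one _ _
  unfold thresholdResidual
  linarith

end ThresholdResidual

theorem sqrt_pi_div_two_lt_sqrt {ρ : ℝ} (h1 : (π - 2) / (π + 2) < ρ) (h2 : ρ < 1) :
    √(π / 2) < √((1 + ρ) / (1 - ρ)) := by
  rw [div_lt_iff₀ (by positivity)] at h1
  refine sqrt_lt_sqrt (by positivity) ?_
  rw [div_lt_div_iff₀ two_pos (by linarith)]
  linarith

/-- For `(π−2)/(π+2) < ρ < 1` and `c = √((1+ρ)/(1−ρ))` (so that `c > √(π/2)`), there is a unique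
`u* > 0` with `1 − 2·Φ(c·u*) + u* = 0`; moreover `−u*` also satisfies the equation, and the
equation `1 − 2·Φ(c·u) + u = 0` has exactly the three real solutions `−u*`, `0`, `u*`. -/
theorem stmt_2 (ρ : ℝ) (h1 : (π - 2) / (π + 2) < ρ) (h2 : ρ < 1)
    (c : ℝ) (hc : c = Real.sqrt ((1 + ρ) / (1 - ρ))) :
    Real.sqrt (π / 2) < c ∧
      ∃ ustar : ℝ, 0 < ustar ∧
        ∀ u : ℝ, 1 - 2 * stdNormCDF (c * u) + u = 0 ↔ u = -ustar ∨ u = 0 ∨ u = ustar := by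
  have hcπ : √(π / 2) < c := hc ▸ sqrt_pi_div_two_lt_sqrt h1 h2
  have hconv := strictConvexOn_thresholdResidual ((sqrt_nonneg _).trans_lt hcπ)
  obtain ⟨ustar, ⟨hpos, hroot⟩, huniq⟩ := hconv.existsUnique_pos_map_eq_zero
    (continuous_thresholdResidual c).continuousOn
    (thresholdResidual_odd c).map_zero (deriv_thresholdResidual_zero_neg hcπ) zero_le_two
    (thresholdResidual_two_pos c)
  exact ⟨hcπ, ustar, hpos, (thresholdResidual_odd c).map_eq_zero_iff_of_unique_pos_root hroot
    fun x hx hfx => huniq x ⟨hx, hfx⟩⟩
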